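/- Let (R, ⊕, ·) be a semihyperring. Then R is fully idempotent if and only if the fuzzy hyperideals of R, ordered pointwise, form a distributive lattice under the sum ⊕ and pointwise minimum, in which moreover min(λ, μ) = λμ for each pair of fuzzy hyperideals λ, μ of R; that is, R is fully idempotent if and only if both (i) min(λ, δ) ⊕ η = min(λ ⊕ η, δ ⊕ η) for all fuzzy hyperideals λ, δ, η of R and (ii) min(λ, μ) = λμ for all fuzzy hyperideals λ, μ of R. -/

import Mathlib

/-- The unit interval `[0,1]` is a complete lattice. -/
noncomputable instance : Fact ((0:ℝ) ≤ 1) := ⟨zero_le_one⟩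

/-- A semihyperring `(R, ⊕, ·)`: a hyperoperation `hadd` (with nonempty values),
a binary multiplication `mul`, and an element `zero`, satisfying commutativity and
(extended) associativity of `⊕`, associativity of `·`, two-sided distributivity of
`·` over `⊕` (as sets), and `0 ⊕ x = {x}`, `0·x = 0 = x·0`. -/
class Semihyperring (R : Type*) where
  hadd : R → R → Set R
  mul : R → R → R
  zero : R
  hadd_nonempty : ∀ x y : R, (hadd x y).Nonempty
  hadd_comm : ∀ x y : R, hadd x y = hadd y x
  hadd_assoc : ∀ x y z : R, (⋃ w ∈ hadd y z, hadd x w) = ⋃ w ∈ hadd x y, hadd w z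
  mul_assoc : ∀ x y z : R, mul (mul x y) z = mul x (mul y z)
  left_distrib : ∀ x y z : R, (fun w => mul x w) '' hadd y z = hadd (mul x y) (mul x z)
  right_distrib : ∀ x y z : R, (fun w => mul w z) '' hadd x y = hadd (mul x z) (mul y z)
  zero_hadd : ∀ x : R, hadd zero x = {x}
  hadd_zero : ∀ x : R, hadd x zero = {x}
  zero_mul : ∀ x : R, mul zero x = zero
  mul_zero : ∀ x : R, mul x zero = zero

namespace Semihyperring

variable {R : Type*} [Semihyperring R]

/-- The hyperoperation `⊕` extended to subsets: `A ⊕ B = ⋃ {a ⊕ b : a ∈ A, b ∈ B}`. -/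
def haddSet (A B : Set R) : Set R := ⋃ a ∈ A, ⋃ b ∈ B, hadd a b

/-- The hypersum `x₁ ⊕ x₂ ⊕ ⋯ ⊕ xₚ` of a list of elements (the empty hypersum is `{0}`,
which is neutral since `0 ⊕ x = {x}`). -/
def hsumList : List R → Set R
  | [] => {zero}
  | x :: xs => haddSet {x} (hsumList xs)

/-- A (two-sided) hyperideal: a nonempty subset closed under `⊕` and under
multiplication by arbitrary elements of `R` on both sides. -/
def IsHyperideal (I : Set R) : Prop :=
  I.Nonempty ∧ (∀ x ∈ I, ∀ y ∈ I, hadd x y ⊆ I) ∧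
    (∀ r : R, ∀ x ∈ I, mul r x ∈ I ∧ mul x r ∈ I)

/-- A right hyperideal. -/
def IsRightHyperideal (I : Set R) : Prop :=
  I.Nonempty ∧ (∀ x ∈ I, ∀ y ∈ I, hadd x y ⊆ I) ∧ (∀ x ∈ I, ∀ r : R, mul x r ∈ I)

/-- A left hyperideal. -/
def IsLeftHyperideal (I : Set R) : Prop :=
  I.Nonempty ∧ (∀ x ∈ I, ∀ y ∈ I, hadd x y ⊆ I) ∧ (∀ x ∈ I, ∀ r : R, mul r x ∈ I)

/-- The product of two subsets:
`AB = {x : x ∈ a₁b₁ ⊕ ⋯ ⊕ aₚbₚ for some p ≥ 1, aᵢ ∈ A, bᵢ ∈ B}`. -/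
def setProd (A B : Set R) : Set R :=
  {x | ∃ l : List (R × R), l ≠ [] ∧ (∀ p ∈ l, p.1 ∈ A ∧ p.2 ∈ B) ∧
    x ∈ hsumList (l.map fun p => mul p.1 p.2)}

/-- `R` is fully idempotent if every hyperideal `I` satisfies `I² = I`. -/
def FullyIdempotent (R : Type*) [Semihyperring R] : Prop :=
  ∀ I : Set R, IsHyperideal I → setProd I I = I

/-- `R` is (von Neumann) regular if every `x` satisfies `x = x·a·x` for some `a`. -/
def Regular (R : Type*) [Semihyperring R] : Prop :=
  ∀ x : R, ∃ a : R, x = mul (mul x a) x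

/-- A fuzzy hyperideal of `R`: a function `μ : R → [0,1]` with
`inf {μ z : z ∈ x ⊕ y} ≥ min (μ x) (μ y)` and `μ (x·y) ≥ max (μ x) (μ y)`. -/
def IsFuzzyHyperideal (μ : R → unitInterval) : Prop :=
  (∀ x y : R, μ x ⊓ μ y ≤ ⨅ z ∈ hadd x y, μ z) ∧
  (∀ x y : R, μ x ⊔ μ y ≤ μ (mul x y))

/-- A fuzzy right hyperideal: `inf {λ z : z ∈ x ⊕ y} ≥ min (λ x) (λ y)` and `λ (x·y) ≥ λ x`. -/
def IsFuzzyRightHyperideal (μ : R → unitInterval) : Prop :=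
  (∀ x y : R, μ x ⊓ μ y ≤ ⨅ z ∈ hadd x y, μ z) ∧
  (∀ x y : R, μ x ≤ μ (mul x y))

/-- A fuzzy left hyperideal: `inf {λ z : z ∈ x ⊕ y} ≥ min (λ x) (λ y)` and `λ (x·y) ≥ λ y`. -/
def IsFuzzyLeftHyperideal (μ : R → unitInterval) : Prop :=
  (∀ x y : R, μ x ⊓ μ y ≤ ⨅ z ∈ hadd x y, μ z) ∧
  (∀ x y : R, μ y ≤ μ (mul x y))

/-- The product `λμ` of fuzzy subsets:
`(λμ)(x) = ⋁ { ⋀_{1≤i≤p} (λ yᵢ ⊓ μ zᵢ) : p ≥ 1, x ∈ y₁z₁ ⊕ ⋯ ⊕ yₚzₚ }`. -/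
noncomputable def fprod (lam mu : R → unitInterval) (x : R) : unitInterval :=
  sSup {t | ∃ l : List (R × R), l ≠ [] ∧
    x ∈ hsumList (l.map fun p => mul p.1 p.2) ∧
    t = ⨅ p ∈ l, lam p.1 ⊓ mu p.2}

/-- The sum `λ ⊕ μ` of fuzzy subsets:
`(λ ⊕ μ)(x) = ⋁ { λ y ⊓ μ z : x ∈ y ⊕ z }`. -/
noncomputable def fsum (lam mu : R → unitInterval) (x : R) : unitInterval :=
  sSup {t | ∃ y z : R, x ∈ hadd y z ∧ t = lam y ⊓ mu z}

/-- The composition `λ ∘ μ` of fuzzy subsets: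
`(λ ∘ μ)(x) = ⋁ { λ y ⊓ μ z : x = y·z }` (with `⋁ ∅ = 0`). -/
noncomputable def fcomp (lam mu : R → unitInterval) (x : R) : unitInterval :=
  sSup {t | ∃ y z : R, x = mul y z ∧ t = lam y ⊓ mu z}

/-- A fuzzy prime hyperideal: a fuzzy hyperideal `η` such that for all fuzzy hyperideals
`λ, μ`, `λμ ≤ η` implies `λ ≤ η` or `μ ≤ η`. -/
def IsFuzzyPrimeHyperideal (η : R → unitInterval) : Prop :=
  IsFuzzyHyperideal η ∧ ∀ lam mu : R → unitInterval, IsFuzzyHyperideal lam →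
    IsFuzzyHyperideal mu → fprod lam mu ≤ η → lam ≤ η ∨ mu ≤ η

/-- A fuzzy irreducible hyperideal: a fuzzy hyperideal `η` such that for all fuzzy
hyperideals `λ, μ`, `min (λ, μ) = η` (pointwise) implies `λ = η` or `μ = η`. -/
def IsFuzzyIrreducibleHyperideal (η : R → unitInterval) : Prop :=
  IsFuzzyHyperideal η ∧ ∀ lam mu : R → unitInterval, IsFuzzyHyperideal lam →
    IsFuzzyHyperideal mu → lam ⊓ mu = η → lam = η ∨ mu = η

/-- `FP R`: the set of proper fuzzy prime hyperideals of `R`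
(`η` is proper if it is not the constant function `1`). -/
def FP (R : Type*) [Semihyperring R] : Set (R → unitInterval) :=
  {η | IsFuzzyPrimeHyperideal η ∧ η ≠ fun _ => 1}

/-- `O λ = {μ ∈ FP R : λ ≰ μ}`. -/
def O (lam : R → unitInterval) : Set (R → unitInterval) :=
  {mu ∈ FP R | ¬ lam ≤ mu}

/-- The sum `Σᵢ ηᵢ` of an arbitrary family of fuzzy subsets:
`(Σᵢ ηᵢ)(x) = ⋁ { ⋀_{1≤k≤p} η_{i_k} (x_k) : p ≥ 1, x ∈ x₁ ⊕ ⋯ ⊕ xₚ }`. -/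
noncomputable def famSum {ι : Type*} (η : ι → R → unitInterval) (x : R) : unitInterval :=
  sSup {t | ∃ l : List (ι × R), l ≠ [] ∧ x ∈ hsumList (l.map Prod.snd) ∧
    t = ⨅ p ∈ l, η p.1 p.2}

end Semihyperring

/-!
If `R` is fully idempotent, fix fuzzy hyperideals `λ, μ` and `x ∈ R`: the level set
`I = {w | (λ ⊓ μ) x ≤ (λ ⊓ μ) w}` is a hyperideal containing `x`, so `x ∈ I²`, which bounds
`(λ ⊓ μ) x` by `(λμ) x`; the reverse inequality always holds. Distributivity then reduces to
`(λ ⊕ η)(δ ⊕ η) ≤ (λ ⊓ δ) ⊕ η`: if `a ∈ u ⊕ v` and `b ∈ p ⊕ q`, then `ab ∈ ub ⊕ vb` and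
`ub ∈ up ⊕ uq`, and each of `up, uq, vb` is bounded below through `0`, where every fuzzy
hyperideal is largest. Conversely, `min(λ, μ) = λμ` for the characteristic function of a
hyperideal `I` says exactly that `I² = I`.
-/

namespace Semihyperring

variable {R : Type*} [Semihyperring R]

lemma mem_haddSet {A B : Set R} {x : R} :
    x ∈ haddSet A B ↔ ∃ a ∈ A, ∃ b ∈ B, x ∈ hadd a b := by
  simp [haddSet]

lemma mem_hsumList_cons {a x : R} {l : List R} :
    x ∈ hsumList (a :: l) ↔ ∃ b ∈ hsumList l, x ∈ hadd a b := by
  simp [hsumList, mem_haddSet]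

lemma hsumList_singleton (a : R) : hsumList [a] = {a} := by
  ext x
  simp [hsumList, mem_haddSet, hadd_zero]

lemma exists_mem_hadd_assoc {x y z w : R} :
    (∃ a ∈ hadd x y, w ∈ hadd a z) ↔ ∃ b ∈ hadd y z, w ∈ hadd x b := by
  have h := Set.ext_iff.1 (hadd_assoc x y z) w
  simp only [Set.mem_iUnion, exists_prop] at h
  exact h.symm

lemma exists_mem_hadd_hadd_swap {y z p q a b w : R} (ha : a ∈ hadd y z) (hb : b ∈ hadd p q)
    (hw : w ∈ hadd a b) : ∃ c ∈ hadd y p, ∃ d ∈ hadd z q, w ∈ hadd c d := by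
  obtain ⟨e, hae, hwe⟩ := exists_mem_hadd_assoc.2 ⟨b, hb, hw⟩
  rw [hadd_comm] at hae
  obtain ⟨c, hc, hec⟩ := exists_mem_hadd_assoc.2 ⟨a, ha, hae⟩
  obtain ⟨d, hd, hwd⟩ := exists_mem_hadd_assoc.1 ⟨e, hec, hwe⟩
  exact ⟨c, hadd_comm p y ▸ hc, d, hd, hwd⟩

lemma mul_mem_hadd_mul_left (r : R) {x y z : R} (h : x ∈ hadd y z) :
    mul r x ∈ hadd (mul r y) (mul r z) :=
  left_distrib r y z ▸ ⟨x, h, rfl⟩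

lemma mul_mem_hadd_mul_right (r : R) {x y z : R} (h : x ∈ hadd y z) :
    mul x r ∈ hadd (mul y r) (mul z r) :=
  right_distrib y z r ▸ ⟨x, h, rfl⟩

section Fuzzy

variable {μ lam mu delta eta f g f' g' : R → unitInterval}

lemma isFuzzyHyperideal_iff :
    IsFuzzyHyperideal μ ↔ (∀ x y z, z ∈ hadd x y → μ x ⊓ μ y ≤ μ z) ∧
      (∀ x y, μ x ≤ μ (mul x y)) ∧ ∀ x y, μ y ≤ μ (mul x y) := by
  simp only [IsFuzzyHyperideal, le_iInf_iff, sup_le_iff]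
  exact ⟨fun h => ⟨fun x y z => h.1 x y z, fun x y => (h.2 x y).1, fun x y => (h.2 x y).2⟩,
    fun h => ⟨fun x y z => h.1 x y z, fun x y => ⟨h.2.1 x y, h.2.2 x y⟩⟩⟩

namespace IsFuzzyHyperideal

variable (hμ : IsFuzzyHyperideal μ)
include hμ

lemma inf_le_of_mem_hadd {x y z : R} (hz : z ∈ hadd x y) : μ x ⊓ μ y ≤ μ z :=
  (isFuzzyHyperideal_iff.1 hμ).1 x y z hz

lemma le_mul_right (x y : R) : μ x ≤ μ (mul x y) :=
  (isFuzzyHyperideal_iff.1 hμ).2.1 x y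

lemma le_mul_left (x y : R) : μ y ≤ μ (mul x y) :=
  (isFuzzyHyperideal_iff.1 hμ).2.2 x y

lemma le_zero (x : R) : μ x ≤ μ zero :=
  (hμ.le_mul_right x zero).trans_eq (congrArg μ (mul_zero x))

lemma isHyperideal_setOf_le (x : R) : IsHyperideal {w | μ x ≤ μ w} :=
  ⟨⟨x, le_refl (μ x)⟩, fun _ ha _ hb _ hw => (le_inf ha hb).trans (hμ.inf_le_of_mem_hadd hw),
    fun r _ ha => ⟨ha.trans (hμ.le_mul_left r _), ha.trans (hμ.le_mul_right _ r)⟩⟩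

end IsFuzzyHyperideal

lemma IsFuzzyHyperideal.inf (hl : IsFuzzyHyperideal lam) (hm : IsFuzzyHyperideal mu) :
    IsFuzzyHyperideal (lam ⊓ mu) :=
  isFuzzyHyperideal_iff.2
    ⟨fun _ _ _ hz => le_inf
      ((inf_le_inf inf_le_left inf_le_left).trans (hl.inf_le_of_mem_hadd hz))
      ((inf_le_inf inf_le_right inf_le_right).trans (hm.inf_le_of_mem_hadd hz)),
    fun x y => inf_le_inf (hl.le_mul_right x y) (hm.le_mul_right x y),
    fun x y => inf_le_inf (hl.le_mul_left x y) (hm.le_mul_left x y)⟩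

lemma isFuzzyHyperideal_indicator {I : Set R} (hI : IsHyperideal I) :
    IsFuzzyHyperideal (I.indicator 1) := by
  have mono : ∀ x y, (x ∈ I → y ∈ I) → I.indicator (1 : R → unitInterval) x ≤ I.indicator 1 y :=
    fun x y hxy => by by_cases hx : x ∈ I <;> simp [hx, hxy]
  refine isFuzzyHyperideal_iff.2 ⟨fun x y z hz => ?_, fun x y => mono _ _ fun hx =>
    (hI.2.2 y x hx).2, fun x y => mono _ _ fun hy => (hI.2.2 x y hy).1⟩
  by_cases hx : x ∈ I
  · exact inf_le_right.trans (mono _ _ fun hy => hI.2.1 x hx y hy hz)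
  · simp [hx]

lemma le_of_mem_hsumList (hμ : ∀ x y : R, μ x ⊓ μ y ≤ ⨅ z ∈ hadd x y, μ z) {l : List R}
    (hl : l ≠ []) {x : R} (hx : x ∈ hsumList l) : ⨅ a ∈ l, μ a ≤ μ x := by
  induction l generalizing x with
  | nil => exact absurd rfl hl
  | cons a l ih =>
    rcases eq_or_ne l [] with rfl | hl'
    · rw [hsumList_singleton] at hx
      exact biInf_le μ (hx ▸ List.mem_cons_self)
    · obtain ⟨b, hb, hx⟩ := mem_hsumList_cons.1 hx
      refine (le_inf (biInf_le μ List.mem_cons_self) ?_).trans ((hμ a b).trans (biInf_le μ hx))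
      exact (biInf_mono fun _ => List.mem_cons_of_mem a).trans (ih hl' hb)

lemma fprod_le (hμ : ∀ x y : R, μ x ⊓ μ y ≤ ⨅ z ∈ hadd x y, μ z)
    (h : ∀ a b, f a ⊓ g b ≤ μ (mul a b)) : fprod f g ≤ μ := by
  intro x
  refine sSup_le ?_
  rintro _ ⟨l, hne, hx, rfl⟩
  refine le_trans ?_ (le_of_mem_hsumList hμ (by simpa using hne) hx)
  simp only [List.mem_map, iInf_exists, iInf_and, le_iInf_iff]
  rintro _ p hp rfl
  exact (iInf₂_le p hp).trans (h p.1 p.2)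

lemma fprod_le_left (hl : IsFuzzyHyperideal lam) : fprod lam mu ≤ lam :=
  fprod_le hl.1 fun a b => inf_le_left.trans (hl.le_mul_right a b)

lemma fprod_le_right (hm : IsFuzzyHyperideal mu) : fprod lam mu ≤ mu :=
  fprod_le hm.1 fun a b => inf_le_right.trans (hm.le_mul_left a b)

lemma le_fprod_of_mem_setProd {A B : Set R} {x : R} {c : unitInterval} (hx : x ∈ setProd A B)
    (hA : ∀ a ∈ A, c ≤ lam a) (hB : ∀ b ∈ B, c ≤ mu b) : c ≤ fprod lam mu x := by
  obtain ⟨l, hne, hmem, hx⟩ := hx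
  exact le_sSup_of_le ⟨l, hne, hx, rfl⟩
    (le_iInf₂ fun p hp => le_inf (hA _ (hmem p hp).1) (hB _ (hmem p hp).2))

lemma mem_setProd_of_pos_fprod_indicator {A B : Set R} {x : R}
    (h : 0 < fprod (A.indicator 1) (B.indicator 1) x) : x ∈ setProd A B := by
  obtain ⟨_, ⟨l, hne, hx, rfl⟩, hpos⟩ := lt_sSup_iff.1 h
  refine ⟨l, hne, fun p hp => ?_, hx⟩
  have hp := lt_inf_iff.1 (hpos.trans_le (biInf_le _ hp))
  exact ⟨Set.mem_of_indicator_ne_zero hp.1.ne', Set.mem_of_indicator_ne_zero hp.2.ne'⟩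

lemma le_fsum_of_mem {x y z : R} (hx : x ∈ hadd y z) : f y ⊓ g z ≤ fsum f g x :=
  le_sSup ⟨y, z, hx, rfl⟩

lemma le_fsum_zero_left (x : R) : f zero ⊓ g x ≤ fsum f g x :=
  le_fsum_of_mem (by rw [zero_hadd]; rfl)

lemma le_fsum_zero_right (x : R) : f x ⊓ g zero ≤ fsum f g x :=
  le_fsum_of_mem (by rw [hadd_zero]; rfl)

lemma fsum_le {x : R} {c : unitInterval} (h : ∀ y z, x ∈ hadd y z → f y ⊓ g z ≤ c) :
    fsum f g x ≤ c :=
  sSup_le fun _ ⟨y, z, hx, ht⟩ => ht ▸ h y z hx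

lemma fsum_inf_fsum_le {a b : R} {c : unitInterval}
    (h : ∀ y z y' z', a ∈ hadd y z → b ∈ hadd y' z' → f y ⊓ g z ⊓ (f' y' ⊓ g' z') ≤ c) :
    fsum f g a ⊓ fsum f' g' b ≤ c := by
  rw [fsum, fsum, sSup_inf_sSup]
  refine iSup₂_le ?_
  rintro ⟨_, _⟩ ⟨⟨y, z, hyz, rfl⟩, ⟨y', z', hyz', rfl⟩⟩
  exact h y z y' z' hyz hyz'

lemma fsum_mono_left (h : f ≤ g) : fsum f eta ≤ fsum g eta :=
  fun _ => fsum_le fun y _ hx => (inf_le_inf_right _ (h y)).trans (le_fsum_of_mem hx)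

lemma IsFuzzyHyperideal.fsum (hl : IsFuzzyHyperideal lam) (he : IsFuzzyHyperideal eta) :
    IsFuzzyHyperideal (fsum lam eta) := by
  refine isFuzzyHyperideal_iff.2 ⟨fun a b w hw => fsum_inf_fsum_le ?_, fun a b => ?_,
    fun a b => ?_⟩
  · intro y z p q hyz hpq
    obtain ⟨c, hc, d, hd, hw⟩ := exists_mem_hadd_hadd_swap hyz hpq hw
    calc lam y ⊓ eta z ⊓ (lam p ⊓ eta q) = lam y ⊓ lam p ⊓ (eta z ⊓ eta q) :=
          inf_inf_inf_comm _ _ _ _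
      _ ≤ lam c ⊓ eta d := inf_le_inf (hl.inf_le_of_mem_hadd hc) (he.inf_le_of_mem_hadd hd)
      _ ≤ Semihyperring.fsum lam eta w := le_fsum_of_mem hw
  · exact fsum_le fun y z hyz => (inf_le_inf (hl.le_mul_right y b) (he.le_mul_right z b)).trans
      (le_fsum_of_mem (mul_mem_hadd_mul_right b hyz))
  · exact fsum_le fun y z hyz => (inf_le_inf (hl.le_mul_left a y) (he.le_mul_left a z)).trans
      (le_fsum_of_mem (mul_mem_hadd_mul_left a hyz))

lemma fsum_inf_fsum_le_fsum_inf_mul (hl : IsFuzzyHyperideal lam)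
    (hd : IsFuzzyHyperideal delta) (he : IsFuzzyHyperideal eta) (a b : R) :
    fsum lam eta a ⊓ fsum delta eta b ≤ fsum (lam ⊓ delta) eta (mul a b) := by
  have hν := (hl.inf hd).fsum he
  refine fsum_inf_fsum_le fun u v p q hu hp => ?_
  set c := lam u ⊓ eta v ⊓ (delta p ⊓ eta q)
  have hcu : c ≤ lam u := inf_le_left.trans inf_le_left
  have hcv : c ≤ eta v := inf_le_left.trans inf_le_right
  have hcp : c ≤ delta p := inf_le_right.trans inf_le_left
  have hcq : c ≤ eta q := inf_le_right.trans inf_le_right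
  have hc0 : c ≤ (lam ⊓ delta) zero :=
    le_inf (hcu.trans (hl.le_zero u)) (hcp.trans (hd.le_zero p))
  have hup_inf : c ≤ (lam ⊓ delta) (mul u p) :=
    le_inf (hcu.trans (hl.le_mul_right u p)) (hcp.trans (hd.le_mul_left u p))
  have hup : c ≤ fsum (lam ⊓ delta) eta (mul u p) :=
    (le_inf hup_inf (hcv.trans (he.le_zero v))).trans (le_fsum_zero_right _)
  have huq : c ≤ fsum (lam ⊓ delta) eta (mul u q) :=
    (le_inf hc0 (hcq.trans (he.le_mul_left u q))).trans (le_fsum_zero_left _)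
  have hvb : c ≤ fsum (lam ⊓ delta) eta (mul v b) :=
    (le_inf hc0 (hcv.trans (he.le_mul_right v b))).trans (le_fsum_zero_left _)
  have hub : c ≤ fsum (lam ⊓ delta) eta (mul u b) :=
    (le_inf hup huq).trans (hν.inf_le_of_mem_hadd (mul_mem_hadd_mul_left u hp))
  exact (le_inf hub hvb).trans (hν.inf_le_of_mem_hadd (mul_mem_hadd_mul_right b hu))

lemma fsum_inf_eq_of_inf_eq_fprod
    (h : ∀ lam mu : R → unitInterval, IsFuzzyHyperideal lam → IsFuzzyHyperideal mu →
      lam ⊓ mu = fprod lam mu)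
    (hl : IsFuzzyHyperideal lam) (hd : IsFuzzyHyperideal delta) (he : IsFuzzyHyperideal eta) :
    fsum (lam ⊓ delta) eta = fsum lam eta ⊓ fsum delta eta := by
  refine le_antisymm (le_inf (fsum_mono_left inf_le_left) (fsum_mono_left inf_le_right)) ?_
  rw [h _ _ (hl.fsum he) (hd.fsum he)]
  exact fprod_le ((hl.inf hd).fsum he).1 (fsum_inf_fsum_le_fsum_inf_mul hl hd he)

lemma FullyIdempotent.inf_eq_fprod (hR : FullyIdempotent R) (hl : IsFuzzyHyperideal lam)
    (hm : IsFuzzyHyperideal mu) : lam ⊓ mu = fprod lam mu := by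
  refine le_antisymm (fun x => ?_) (le_inf (fprod_le_left hl) (fprod_le_right hm))
  set I := {w | (lam ⊓ mu) x ≤ (lam ⊓ mu) w}
  have hx : x ∈ setProd I I := by
    rw [hR I ((hl.inf hm).isHyperideal_setOf_le x)]
    exact le_refl ((lam ⊓ mu) x)
  exact le_fprod_of_mem_setProd hx (fun _ ha => ha.trans inf_le_left)
    (fun _ hb => hb.trans inf_le_right)

lemma fullyIdempotent_of_inf_eq_fprod
    (h : ∀ lam mu : R → unitInterval, IsFuzzyHyperideal lam → IsFuzzyHyperideal mu →
      lam ⊓ mu = fprod lam mu) : FullyIdempotent R := by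
  intro I hI
  have hχ := isFuzzyHyperideal_indicator hI
  have heq : ∀ x, I.indicator 1 x = fprod (I.indicator 1) (I.indicator 1) x := by
    simpa only [inf_idem] using congrFun (h _ _ hχ hχ)
  ext x
  refine ⟨fun hx => ?_, fun hx => mem_setProd_of_pos_fprod_indicator ?_⟩
  · have h1 : (1 : unitInterval) ≤ fprod (I.indicator 1) (I.indicator 1) x :=
      le_fprod_of_mem_setProd hx (fun _ ha => by simp [ha]) (fun _ hb => by simp [hb])
    rw [← heq] at h1
    by_contra hxI
    simp [hxI] at h1
  · simp [← heq, hx]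

end Fuzzy

end Semihyperring

open Semihyperring in
/-- `R` is fully idempotent iff the fuzzy hyperideals of `R` form a
distributive lattice under sum and pointwise minimum in which `min (λ, μ) = λμ`, i.e. iff
(i) `min (λ, δ) ⊕ η = min (λ ⊕ η, δ ⊕ η)` for all fuzzy hyperideals `λ, δ, η`, and
(ii) `min (λ, μ) = λμ` for all fuzzy hyperideals `λ, μ`. -/
theorem fullyIdempotent_iff_distributive_lattice (R : Type*) [Semihyperring R] :
    FullyIdempotent R ↔
      ((∀ lam delta eta : R → unitInterval, IsFuzzyHyperideal lam →
          IsFuzzyHyperideal delta → IsFuzzyHyperideal eta →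
          fsum (lam ⊓ delta) eta = fsum lam eta ⊓ fsum delta eta) ∧
        (∀ lam mu : R → unitInterval, IsFuzzyHyperideal lam → IsFuzzyHyperideal mu →
          lam ⊓ mu = fprod lam mu)) := by
  refine ⟨fun hR => ?_, fun h => fullyIdempotent_of_inf_eq_fprod h.2⟩
  have hinf : ∀ lam mu : R → unitInterval, IsFuzzyHyperideal lam → IsFuzzyHyperideal mu →
      lam ⊓ mu = fprod lam mu := fun _ _ => hR.inf_eq_fprod
  exact ⟨fun _ _ _ => fsum_inf_eq_of_inf_eq_fprod hinf, hinf⟩
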